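/- Define C₀ := R + ‖f‖/‖A‖ and C_der := ‖A‖ + ‖B‖R + (‖B‖/‖A‖)·‖f‖. Then for every v ∈ B_R and every i ≥ 0, the derivatives of the solution of du/dt = -Au - B(u,u) + f satisfy ‖Dⁱv‖ ≤ C₀·(C_der)ⁱ·i!. -/

import Mathlib

/-!
Differentiating the equation `i` times and applying the Leibniz rule to the bilinear term
gives `‖Dⁱ⁺¹v‖ ≤ ‖A‖‖Dⁱv‖ + ‖B‖ ∑ⱼ (i choose j) ‖Dʲv‖‖Dⁱ⁻ʲv‖` for `i ≥ 1`, since the constant `f`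
only enters `D¹v`. With the induction hypothesis `‖Dʲv‖ ≤ C₀ Kʲ j!`, each term of the sum is at
most `C₀² Kⁱ i!` and there are `i + 1` of them, so the right-hand side is at most
`(‖A‖ + ‖B‖C₀) C₀ Kⁱ (i+1)!`; this closes the induction exactly because
`K = ‖A‖ + ‖B‖C₀`. The base case `D¹v` is where `f` is absorbed, through `‖A‖C₀ = ‖A‖R + ‖f‖`.
-/

open Finset Nat
open scoped ContDiff

theorem sum_choose_mul_le_of_le_factorial {a : ℕ → ℝ} {c K : ℝ} {n : ℕ} (ha : ∀ j, 0 ≤ a j)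
    (hle : ∀ j ≤ n, a j ≤ c * K ^ j * j !) :
    ∑ j ∈ range (n + 1), (n.choose j : ℝ) * a j * a (n - j) ≤ (n + 1) * (c ^ 2 * K ^ n * n !) := by
  calc ∑ j ∈ range (n + 1), (n.choose j : ℝ) * a j * a (n - j)
      ≤ ∑ _j ∈ range (n + 1), c ^ 2 * K ^ n * n ! := by
        refine sum_le_sum fun j hj => ?_
        have hjn : j ≤ n := Nat.lt_succ_iff.mp (mem_range.mp hj)
        calc (n.choose j : ℝ) * a j * a (n - j)
            ≤ n.choose j * (c * K ^ j * j !) * (c * K ^ (n - j) * (n - j)!) := by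
              have hj := hle j hjn
              exact mul_le_mul (mul_le_mul_of_nonneg_left hj (Nat.cast_nonneg _))
                (hle (n - j) (Nat.sub_le n j)) (ha _)
                (mul_nonneg (Nat.cast_nonneg _) ((ha j).trans hj))
          _ = c ^ 2 * (K ^ j * K ^ (n - j)) * ((n.choose j * j ! * (n - j)! : ℕ) : ℝ) := by
              push_cast; ring
          _ = c ^ 2 * K ^ n * n ! := by
              rw [← pow_add, Nat.add_sub_cancel' hjn, Nat.choose_mul_factorial_mul_factorial hjn]
    _ = (n + 1) * (c ^ 2 * K ^ n * n !) := by simp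

theorem le_mul_pow_mul_factorial_of_quadratic_recurrence {a : ℕ → ℝ} {α β c : ℝ}
    (hα : 0 ≤ α) (hβ : 0 ≤ β) (ha : ∀ n, 0 ≤ a n) (h0 : a 0 ≤ c) (h1 : a 1 ≤ c * (α + β * c))
    (hrec : ∀ n, 0 < n →
      a (n + 1) ≤ α * a n + β * ∑ j ∈ range (n + 1), (n.choose j : ℝ) * a j * a (n - j)) :
    ∀ n, a n ≤ c * (α + β * c) ^ n * n ! := by
  have hc : 0 ≤ c := (ha 0).trans h0
  have hK : 0 ≤ α + β * c := by positivity
  intro n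
  induction n using Nat.strong_induction_on with
  | _ n ih =>
    match n with
    | 0 => simpa using h0
    | 1 => simpa using h1
    | n + 2 =>
      have hsum := sum_choose_mul_le_of_le_factorial (n := n + 1) ha fun j hj => ih j (by omega)
      have hprev := ih (n + 1) (by omega)
      have hfact : ((n + 1)! : ℝ) ≤ (n + 2)! := by exact_mod_cast Nat.factorial_le (by omega)
      calc a (n + 2) ≤ α * a (n + 1) + β * ∑ j ∈ range (n + 2),
            ((n + 1).choose j : ℝ) * a j * a (n + 1 - j) := hrec (n + 1) (by omega)
        _ ≤ α * (c * (α + β * c) ^ (n + 1) * (n + 2)!) +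
            β * ((n + 1 + 1) * (c ^ 2 * (α + β * c) ^ (n + 1) * (n + 1)!)) := by
          gcongr
          · exact hprev.trans (by gcongr)
          · exact_mod_cast hsum
        _ = c * (α + β * c) ^ (n + 2) * (n + 2)! := by
          rw [Nat.factorial_succ (n + 1)]; push_cast; ring

variable {𝕜 E F G : Type*} [NontriviallyNormedField 𝕜]
  [NormedAddCommGroup E] [NormedSpace 𝕜 E] [NormedAddCommGroup F] [NormedSpace 𝕜 F]
  [NormedAddCommGroup G] [NormedSpace 𝕜 G]

theorem contDiff_of_forall_hasDerivAt_comp {V : E → E} {u : 𝕜 → E} (hV : ContDiff 𝕜 ∞ V)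
    (hu : ∀ t, HasDerivAt u (V (u t)) t) : ContDiff 𝕜 ∞ u := by
  have hderiv : deriv u = V ∘ u := funext fun t => (hu t).deriv
  have hdiff : Differentiable 𝕜 u := fun t => (hu t).differentiableAt
  refine contDiff_infty.mpr fun n => ?_
  induction n with
  | zero => exact contDiff_zero.mpr hdiff.continuous
  | succ n ih =>
    refine (contDiff_succ_iff_deriv (n := n)).mpr ⟨hdiff, by simp, ?_⟩
    rw [hderiv]
    exact (hV.of_le (by exact_mod_cast le_top)).comp ih

theorem norm_iteratedDeriv_clm_apply_le (L : E →L[𝕜] F) {u : 𝕜 → E} {n : ℕ}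
    (hu : ContDiff 𝕜 n u) (t : 𝕜) :
    ‖iteratedDeriv n (fun s => L (u s)) t‖ ≤ ‖L‖ * ‖iteratedDeriv n u t‖ := by
  simp only [← norm_iteratedFDeriv_eq_norm_iteratedDeriv]
  rw [show (fun s => L (u s)) = L ∘ u from rfl, L.iteratedFDeriv_comp_left hu.contDiffAt le_rfl]
  exact L.norm_compContinuousMultilinearMap_le _

theorem norm_iteratedDeriv_bilinear_le (B : E →L[𝕜] F →L[𝕜] G) {u : 𝕜 → E} {v : 𝕜 → F}
    {n : ℕ} (hu : ContDiff 𝕜 n u) (hv : ContDiff 𝕜 n v) (t : 𝕜) :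
    ‖iteratedDeriv n (fun s => B (u s) (v s)) t‖ ≤ ‖B‖ * ∑ j ∈ range (n + 1),
      (n.choose j : ℝ) * ‖iteratedDeriv j u t‖ * ‖iteratedDeriv (n - j) v t‖ := by
  simpa only [norm_iteratedFDeriv_eq_norm_iteratedDeriv] using
    B.norm_iteratedFDeriv_le_of_bilinear hu hv t le_rfl

theorem norm_neg_sub_add_le (A : E →L[𝕜] E) (B : E →L[𝕜] E →L[𝕜] E) (f x : E) :
    ‖-A x - B x x + f‖ ≤ ‖A‖ * ‖x‖ + ‖B‖ * ‖x‖ ^ 2 + ‖f‖ := by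
  refine (norm_add_le _ _).trans (add_le_add_left ((norm_sub_le _ _).trans ?_) _)
  rw [norm_neg, sq, ← mul_assoc]
  exact add_le_add (A.le_opNorm _) (B.le_opNorm₂ _ _)

theorem norm_iteratedDeriv_succ_le_of_hasDerivAt (A : E →L[𝕜] E) (B : E →L[𝕜] E →L[𝕜] E)
    (f : E) {u : 𝕜 → E} (hu : ∀ t, HasDerivAt u (-A (u t) - B (u t) (u t) + f) t)
    {n : ℕ} (hn : 0 < n) (t : 𝕜) :
    ‖iteratedDeriv (n + 1) u t‖ ≤ ‖A‖ * ‖iteratedDeriv n u t‖ + ‖B‖ * ∑ j ∈ range (n + 1),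
      (n.choose j : ℝ) * ‖iteratedDeriv j u t‖ * ‖iteratedDeriv (n - j) u t‖ := by
  have hsmooth : ContDiff 𝕜 n u :=
    (contDiff_of_forall_hasDerivAt_comp
      ((A.contDiff.neg.sub (B.contDiff.clm_apply contDiff_id)).add contDiff_const) hu).of_le
      (by exact_mod_cast le_top)
  have hderiv : deriv u = fun s => f + -(A (u s) + B (u s) (u s)) :=
    funext fun s => (hu s).deriv.trans (by abel)
  rw [iteratedDeriv_succ', hderiv, iteratedDeriv_const_add hn, iteratedDeriv_fun_neg, norm_neg,
    iteratedDeriv_fun_add (f := fun s => A (u s)) (g := fun s => B (u s) (u s))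
      (A.contDiff.comp hsmooth).contDiffAt
      ((B.contDiff.comp hsmooth).clm_apply hsmooth).contDiffAt]
  exact (norm_add_le _ _).trans (add_le_add (norm_iteratedDeriv_clm_apply_le A hsmooth t)
    (norm_iteratedDeriv_bilinear_le B hsmooth hsmooth t))

theorem iteratedDeriv_solution_norm_bound_general
    (d : ℕ)
    (A : EuclideanSpace ℝ (Fin d) →L[ℝ] EuclideanSpace ℝ (Fin d))
    (B : EuclideanSpace ℝ (Fin d) →L[ℝ]
      EuclideanSpace ℝ (Fin d) →L[ℝ] EuclideanSpace ℝ (Fin d))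
    (f : EuclideanSpace ℝ (Fin d))
    (R : ℝ) (hA : A ≠ 0)
    (u : ℝ → EuclideanSpace ℝ (Fin d))
    (hu : ∀ t : ℝ, HasDerivAt u (-A (u t) - B (u t) (u t) + f) t)
    (huR : ∀ t : ℝ, ‖u t‖ ≤ R) :
    ∀ i : ℕ, ‖iteratedDeriv i u 0‖ ≤
      (R + ‖f‖ / ‖A‖) * (‖A‖ + ‖B‖ * R + (‖B‖ / ‖A‖) * ‖f‖) ^ i * (i.factorial : ℝ) := by
  have hA₀ : 0 < ‖A‖ := norm_pos_iff.mpr hA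
  have hR₀ : 0 ≤ R := (norm_nonneg _).trans (huR 0)
  set C₀ := R + ‖f‖ / ‖A‖ with hC₀
  have hRC₀ : R ≤ C₀ := le_add_of_nonneg_right (by positivity)
  have hAC₀ : ‖A‖ * C₀ = ‖A‖ * R + ‖f‖ := by rw [hC₀]; field_simp
  have hK : ‖A‖ + ‖B‖ * R + ‖B‖ / ‖A‖ * ‖f‖ = ‖A‖ + ‖B‖ * C₀ := by rw [hC₀]; field_simp; ring
  have hD₁ : ‖iteratedDeriv 1 u 0‖ ≤ ‖A‖ * R + ‖B‖ * R ^ 2 + ‖f‖ := by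
    rw [iteratedDeriv_one, (hu 0).deriv]
    exact (norm_neg_sub_add_le A B f (u 0)).trans (by gcongr <;> exact huR 0)
  rw [hK]
  refine le_mul_pow_mul_factorial_of_quadratic_recurrence (norm_nonneg A) (norm_nonneg B)
    (fun _ => norm_nonneg _) ?_ ?_
    fun _ hn => norm_iteratedDeriv_succ_le_of_hasDerivAt A B f hu hn 0
  · simpa using (huR 0).trans hRC₀
  · calc ‖iteratedDeriv 1 u 0‖ ≤ ‖A‖ * R + ‖B‖ * R ^ 2 + ‖f‖ := hD₁
      _ ≤ ‖A‖ * R + ‖f‖ + ‖B‖ * C₀ ^ 2 := by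
        linarith [mul_le_mul_of_nonneg_left (pow_le_pow_left₀ hR₀ hRC₀ 2) (norm_nonneg B)]
      _ = C₀ * (‖A‖ + ‖B‖ * C₀) := by rw [← hAC₀]; ring

/-- Factorial growth bound for the derivatives of the solution: with
`C₀ = R + ‖f‖/‖A‖` and `C_der = ‖A‖ + ‖B‖R + (‖B‖/‖A‖)‖f‖`, if `u` solves
`du/dt = -Au - B(u,u) + f` with `u(0) = v`, `‖v‖ ≤ R`, and the trajectory stays
in the ball of radius `R`, then `‖Dⁱv‖ ≤ C₀·C_derⁱ·i!` for every `i ≥ 0`. -/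
theorem iteratedDeriv_solution_norm_bound
    (d : ℕ)
    (A : EuclideanSpace ℝ (Fin d) →L[ℝ] EuclideanSpace ℝ (Fin d))
    (B : EuclideanSpace ℝ (Fin d) →L[ℝ]
      EuclideanSpace ℝ (Fin d) →L[ℝ] EuclideanSpace ℝ (Fin d))
    (f : EuclideanSpace ℝ (Fin d))
    (R : ℝ) (hR : 0 < R) (hA : A ≠ 0)
    (u : ℝ → EuclideanSpace ℝ (Fin d)) (v : EuclideanSpace ℝ (Fin d))
    (hu0 : u 0 = v) (hvR : ‖v‖ ≤ R)
    (hu : ∀ t : ℝ, HasDerivAt u (-A (u t) - B (u t) (u t) + f) t)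
    (huR : ∀ t : ℝ, ‖u t‖ ≤ R) :
    ∀ i : ℕ, ‖iteratedDeriv i u 0‖ ≤
      (R + ‖f‖ / ‖A‖) * (‖A‖ + ‖B‖ * R + (‖B‖ / ‖A‖) * ‖f‖) ^ i * (i.factorial : ℝ) :=
  iteratedDeriv_solution_norm_bound_general d A B f R hA u hu huR
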